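/- Each cell's hot-spot status is examined at most twice during the monotone expansion of the local search region: if a cell c first enters S^ℓ at expansion step k(c), then c is newly examined at step k(c) and re-examined at most once more (when its last neighbor enters the region), so the total number of examinations over all expansions up to size ℓ̃ is at most 2·|S^{ℓ̃}|. -/
import Mathlib


open Classical in
/-- Each cell's hot-spot status is examined at most twice during the
monotone expansion of the local search region. The square of Chebyshev radius m about
the center (a,b) models S^ℓ with ℓ = 2m+1; the expansion steps are m = 1, …, M
(ℓ = 3, 5, …, ℓ̃). A cell c is examined at step m if c ∈ S^m and either c ∉ S^{m−1} or
some 8-neighbor of c lies in S^m but not in S^{m−1}. Then every cell is examined at most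
twice across all steps, and the total number of examinations is at most 2·|S^M|. -/
theorem stmt_14 (a b : ℤ) (M : ℕ)
    (S : ℕ → Finset (ℤ × ℤ))
    (hS : ∀ m : ℕ, S m =
      Finset.Icc (a - m) (a + m) ×ˢ Finset.Icc (b - m) (b + m))
    (examined : ℕ → ℤ × ℤ → Prop)
    (hex : ∀ m : ℕ, 1 ≤ m → ∀ c : ℤ × ℤ, examined m c ↔
      c ∈ S m ∧ (c ∉ S (m - 1) ∨
        ∃ nb : ℤ × ℤ, nb ≠ c ∧ |nb.1 - c.1| ≤ 1 ∧ |nb.2 - c.2| ≤ 1 ∧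
          nb ∈ S m ∧ nb ∉ S (m - 1))) :
    (∀ c : ℤ × ℤ,
      ((Finset.Icc 1 M).filter (fun m => examined m c)).card ≤ 2) ∧
    (∑ m ∈ Finset.Icc 1 M, ((S M).filter (fun c => examined m c)).card
      ≤ 2 * (S M).card) := by
  -- membership characterization
  have hmem : ∀ (m : ℕ) (c : ℤ × ℤ), c ∈ S m ↔
      a - m ≤ c.1 ∧ c.1 ≤ a + m ∧ b - m ≤ c.2 ∧ c.2 ≤ b + m := by
    intro m c
    rw [hS m, Finset.mem_product, Finset.mem_Icc, Finset.mem_Icc]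
    tauto
  -- key lemma: examined m c forces m ∈ {R, R+1} where R is the Chebyshev radius of c
  have key : ∀ c : ℤ × ℤ, ∀ m ∈ Finset.Icc 1 M, examined m c →
      m = (max |c.1 - a| |c.2 - b|).toNat ∨
      m = (max |c.1 - a| |c.2 - b|).toNat + 1 := by
    intro c m hm hexm
    rw [Finset.mem_Icc] at hm
    rw [hex m hm.1 c] at hexm
    obtain ⟨hc, hrest⟩ := hexm
    rw [hmem m c] at hc
    set A := |c.1 - a| with hAdef
    set B := |c.2 - b| with hBdef
    have hA1 : c.1 - a ≤ A := le_abs_self _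
    have hA2 : -(c.1 - a) ≤ A := neg_le_abs _
    have hAc : A = c.1 - a ∨ A = -(c.1 - a) := abs_choice _
    have hB1 : c.2 - b ≤ B := le_abs_self _
    have hB2 : -(c.2 - b) ≤ B := neg_le_abs _
    have hBc : B = c.2 - b ∨ B = -(c.2 - b) := abs_choice _
    have hmx1 : A ≤ max A B := le_max_left _ _
    have hmx2 : B ≤ max A B := le_max_right _ _
    have hmxc : max A B = A ∨ max A B = B := max_choice _ _
    have h0 : (0:ℤ) ≤ max A B := le_trans (abs_nonneg _) hmx1
    have hcast : ((max A B).toNat : ℤ) = max A B := Int.toNat_of_nonneg h0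
    rcases hrest with hnot | ⟨nb, _, hn1, hn2, hnin, hnout⟩
    · rw [hmem (m-1) c] at hnot
      push_neg at hnot
      omega
    · rw [hmem m nb] at hnin
      rw [hmem (m-1) nb] at hnout
      push_neg at hnout
      rw [abs_le] at hn1 hn2
      omega
  have hper : ∀ c : ℤ × ℤ,
      ((Finset.Icc 1 M).filter (fun m => examined m c)).card ≤ 2 := by
    intro c
    have hsub : (Finset.Icc 1 M).filter (fun m => examined m c) ⊆
        {(max |c.1 - a| |c.2 - b|).toNat, (max |c.1 - a| |c.2 - b|).toNat + 1} := by
      intro m hm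
      rw [Finset.mem_filter] at hm
      rcases key c m hm.1 hm.2 with h | h <;> simp [h]
    calc ((Finset.Icc 1 M).filter (fun m => examined m c)).card
        ≤ ({(max |c.1 - a| |c.2 - b|).toNat,
            (max |c.1 - a| |c.2 - b|).toNat + 1} : Finset ℕ).card :=
          Finset.card_le_card hsub
      _ ≤ 2 := (Finset.card_insert_le _ _).trans (by simp)
  refine ⟨hper, ?_⟩
  calc ∑ m ∈ Finset.Icc 1 M, ((S M).filter (fun c => examined m c)).card
      = ∑ m ∈ Finset.Icc 1 M, ∑ c ∈ S M, (if examined m c then 1 else 0) := by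
        simp only [Finset.card_filter]
    _ = ∑ c ∈ S M, ∑ m ∈ Finset.Icc 1 M, (if examined m c then 1 else 0) :=
        Finset.sum_comm
    _ = ∑ c ∈ S M, ((Finset.Icc 1 M).filter (fun m => examined m c)).card := by
        simp only [Finset.card_filter]
    _ ≤ ∑ _c ∈ S M, 2 := Finset.sum_le_sum (fun c _ => hper c)
    _ = 2 * (S M).card := by rw [Finset.sum_const, smul_eq_mul, mul_comm]
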